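/- The 3-dimensional cube graph Q_3 has no spanning tree with more than 4 leaves. -/

import Mathlib

/-!
A spanning tree of `Q_3` has 8 vertices, 7 edges and maximum degree 3, so if it had at least
5 leaves, the degree sum 14 would force the other three vertices to have degree 3; they then keep
all their cube edges. But any three vertices of `Q_3` include two with a common neighbour outside
the three, and that neighbour would be a leaf adjacent in the tree to both.
-/

/-- `T` is a spanning tree of `G`: a subgraph on all vertices that is a tree. -/
def IsSpanningTreeOf {V : Type*} (T G : SimpleGraph V) : Prop := T ≤ G ∧ T.IsTree

/-- The set of leaves (vertices of degree 1) of a graph. -/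
def leafSet {V : Type*} (T : SimpleGraph V) : Set V := {v | (T.neighborSet v).ncard = 1}

/-- The number of leaves of a graph. -/
noncomputable def numLeaves {V : Type*} (T : SimpleGraph V) : ℕ := (leafSet T).ncard

/-- The 3-dimensional cube graph `Q_3` on the vertex set `{0,1}^3`: two vertices are
adjacent iff they differ in exactly one coordinate. -/
def cubeQ3 : SimpleGraph (Fin 3 → Bool) :=
  SimpleGraph.fromRel (fun v w => (Finset.univ.filter fun i => v i ≠ w i).card = 1)

open Finset

namespace SimpleGraph

variable {V : Type*}

theorem numLeaves_eq_card_filter [Fintype V] (G : SimpleGraph V) [DecidableRel G.Adj] :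
    numLeaves G = #{v | G.degree v = 1} := by
  have hleaf : leafSet G = ↑({v | G.degree v = 1} : Finset V) := by
    ext v
    simp [leafSet, ← card_neighborSet_eq_degree, Set.ncard_eq_toFinset_card']
  rw [numLeaves, hleaf, Set.ncard_coe_finset]

theorem sum_degrees_add_two_eq_of_isTree [Fintype V] {G : SimpleGraph V} [DecidableRel G.Adj]
    (hG : G.IsTree) : ∑ v, G.degree v + 2 = 2 * Fintype.card V := by
  rw [sum_degrees_eq_twice_card_edges, ← hG.card_edgeFinset]
  ring

/-- Each vertex contributes at most `k` to the left-hand side: a leaf `1 + (k - 1)`, a vertex of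
degree `k` exactly `k`, and any other vertex `degree + 1`. -/
theorem sum_degrees_add_card_leaves_le [Fintype V] (G : SimpleGraph V) [DecidableRel G.Adj]
    {k : ℕ} (hk : ∀ v, G.degree v ≤ k) :
    ∑ v, G.degree v + (k - 1) * #{v | G.degree v = 1} + #{v | G.degree v ≠ 1 ∧ G.degree v ≠ k}
      ≤ k * Fintype.card V := by
  have hvertex : ∀ v, G.degree v + (k - 1) * (if G.degree v = 1 then 1 else 0) +
      (if G.degree v ≠ 1 ∧ G.degree v ≠ k then 1 else 0) ≤ k := fun v => by
    have := hk v
    split_ifs <;> omega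
  calc ∑ v, G.degree v + (k - 1) * #{v | G.degree v = 1} + #{v | G.degree v ≠ 1 ∧ G.degree v ≠ k}
      = ∑ v, (G.degree v + (k - 1) * (if G.degree v = 1 then 1 else 0) +
          (if G.degree v ≠ 1 ∧ G.degree v ≠ k then 1 else 0)) := by
        simp only [sum_add_distrib, ← mul_sum, sum_boole, Nat.cast_id]
    _ ≤ ∑ _v : V, k := sum_le_sum fun v _ => hvertex v
    _ = k * Fintype.card V := by simp [mul_comm]

theorem adj_of_degree_eq {G H : SimpleGraph V} (hle : G ≤ H) {v w : V}
    [Fintype (G.neighborSet v)] [Fintype (H.neighborSet v)] (hdeg : G.degree v = H.degree v)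
    (hadj : H.Adj v w) : G.Adj v w := by
  have hnbr : G.neighborSet v = H.neighborSet v :=
    Set.eq_of_subset_of_card_le (fun _ h => hle h)
      (by rw [card_neighborSet_eq_degree, card_neighborSet_eq_degree, hdeg])
  rwa [← mem_neighborSet, hnbr]

theorem two_le_degree_of_adj_of_degree_eq [Fintype V] {G H : SimpleGraph V} [DecidableRel G.Adj]
    [DecidableRel H.Adj] (hle : G ≤ H) {d x y : V} (hxy : x ≠ y)
    (hx : G.degree x = H.degree x) (hy : G.degree y = H.degree y)
    (hxd : H.Adj x d) (hyd : H.Adj y d) : 2 ≤ G.degree d := by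
  rw [← card_neighborFinset_eq_degree]
  refine one_lt_card.mpr ⟨x, ?_, y, ?_, hxy⟩
  · simpa using (adj_of_degree_eq hle hx hxd).symm
  · simpa using (adj_of_degree_eq hle hy hyd).symm

end SimpleGraph

open SimpleGraph

instance : DecidableRel cubeQ3.Adj :=
  inferInstanceAs (DecidableRel (SimpleGraph.fromRel _).Adj)

theorem cubeQ3_degree (v : Fin 3 → Bool) : cubeQ3.degree v = 3 := by
  revert v
  decide

/-- Two of any three vertices lie in the same bipartition class, hence differ in exactly two
coordinates and have two common neighbours, at most one of which is the third vertex. -/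
theorem cubeQ3_exists_common_neighbor {S : Finset (Fin 3 → Bool)} (hS : #S = 3) :
    ∃ d ∉ S, ∃ x ∈ S, ∃ y ∈ S, x ≠ y ∧ cubeQ3.Adj x d ∧ cubeQ3.Adj y d := by
  obtain ⟨a, b, c, hab, hac, hbc, rfl⟩ := card_eq_three.mp hS
  clear hS
  revert a b c
  decide

/-- The cube `Q_3` has no spanning tree with more than 4 leaves. -/
theorem cube_leaves_le_four (T : SimpleGraph (Fin 3 → Bool))
    (hT : IsSpanningTreeOf T cubeQ3) : numLeaves T ≤ 4 := by
  classical
  obtain ⟨hle, htree⟩ := hT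
  have hdeg : ∀ v, T.degree v ≤ 3 := fun v =>
    (degree_le_of_le hle).trans (cubeQ3_degree v).le
  have hsum := sum_degrees_add_two_eq_of_isTree htree
  have hcount := T.sum_degrees_add_card_leaves_le hdeg
  have hpart : #{v | T.degree v = 1} + #{v | T.degree v ≠ 1} = 8 :=
    (card_filter_add_card_filter_not _).trans (by simp)
  simp only [Fintype.card_fun, Fintype.card_bool, Fintype.card_fin] at hsum hcount
  rw [numLeaves_eq_card_filter]
  by_contra! hmany
  have hinternal : #{v | T.degree v ≠ 1} = 3 := by omega
  have hfull : ∀ v ∈ ({v | T.degree v ≠ 1} : Finset _), T.degree v = cubeQ3.degree v := by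
    have hnone : #{v | T.degree v ≠ 1 ∧ T.degree v ≠ 3} = 0 := by omega
    simpa [cubeQ3_degree, card_eq_zero, filter_eq_empty_iff] using hnone
  obtain ⟨d, hd, x, hx, y, hy, hxy, hxd, hyd⟩ := cubeQ3_exists_common_neighbor hinternal
  have htwo := two_le_degree_of_adj_of_degree_eq hle hxy (hfull x hx) (hfull y hy) hxd hyd
  simp only [mem_filter, mem_univ, true_and, not_not] at hd
  omega
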